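/- arXiv:1810.03398 — 10 statements merged into one kernel-verified Lean document; each statement's English description precedes it below -/
import Mathlib

section
/- Let Σ₀ be a symmetric positive-definite d×d real matrix, A an invertible d×d matrix, Sₘ a d×m matrix with linearly independent columns, x₀, x* ∈ ℝ^d, and r₀ = A x* − A x₀. Then the vector xₘ = x₀ + Σ₀ Aᵀ Sₘ (Sₘᵀ A Σ₀ Aᵀ Sₘ)⁻¹ Sₘᵀ r₀ is the unique minimizer of ‖x − x*‖_{Σ₀⁻¹} over the affine subspace x₀ + range(Σ₀ Aᵀ Sₘ), where ‖v‖²_{Σ₀⁻¹} = vᵀ Σ₀⁻¹ v. -/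
open Matrix

/-- the SBI posterior mean `xₘ = x₀ + Σ₀ Aᵀ Sₘ (Sₘᵀ A Σ₀ Aᵀ Sₘ)⁻¹ Sₘᵀ r₀`
is the unique minimizer of `‖x − x*‖_{Σ₀⁻¹}` over `x₀ + range(Σ₀ Aᵀ Sₘ)`. -/
theorem sbi_posterior_mean_optimality
    (d m : ℕ) (A Sig : Matrix (Fin d) (Fin d) ℝ) (S : Matrix (Fin d) (Fin m) ℝ)
    (x₀ xstar : Fin d → ℝ)
    (hSig : Sig.PosDef) (hA : IsUnit A)
    (hS : LinearIndependent ℝ (fun j : Fin m => Sᵀ j))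
    (hinv : IsUnit (Sᵀ * A * Sig * Aᵀ * S)) :
    let r₀ := A *ᵥ xstar - A *ᵥ x₀
    let xm := x₀ + (Sig * Aᵀ * S) *ᵥ ((Sᵀ * A * Sig * Aᵀ * S)⁻¹ *ᵥ (Sᵀ *ᵥ r₀))
    let f := fun x : Fin d → ℝ => Real.sqrt ((x - xstar) ⬝ᵥ (Sig⁻¹ *ᵥ (x - xstar)))
    (∀ c : Fin m → ℝ, f xm ≤ f (x₀ + (Sig * Aᵀ * S) *ᵥ c)) ∧
      (∀ c : Fin m → ℝ, f (x₀ + (Sig * Aᵀ * S) *ᵥ c) = f xm →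
        x₀ + (Sig * Aᵀ * S) *ᵥ c = xm) := by
  intro r₀ xm f
  have hSigdet : IsUnit Sig.det := hSig.det_pos.ne'.isUnit
  have hMdet : IsUnit (Sᵀ * A * Sig * Aᵀ * S).det :=
    (Matrix.isUnit_iff_isUnit_det _).mp hinv
  set B : Matrix (Fin d) (Fin m) ℝ := Sig * Aᵀ * S with hB
  set M : Matrix (Fin m) (Fin m) ℝ := Sᵀ * A * Sig * Aᵀ * S with hM
  set cstar : Fin m → ℝ := M⁻¹ *ᵥ (Sᵀ *ᵥ r₀) with hcstar
  have hSigT : Sigᵀ = Sig := hSig.isHermitian.eq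
  have hSinv : Sig⁻¹.PosDef := hSig.inv
  have hSinvT : Sig⁻¹ᵀ = Sig⁻¹ := by rw [Matrix.transpose_nonsing_inv, hSigT]
  have hBT : Bᵀ * Sig⁻¹ = Sᵀ * A := by
    rw [hB, Matrix.transpose_mul, Matrix.transpose_mul, Matrix.transpose_transpose, hSigT,
      Matrix.mul_assoc, Matrix.mul_assoc, Matrix.mul_nonsing_inv _ hSigdet, Matrix.mul_one]
  set vstar : Fin d → ℝ := B *ᵥ cstar - (xstar - x₀) with hvstar
  have hxm : xm - xstar = vstar := by
    simp only [hvstar, xm, ← hM, ← hcstar, ← hB]; ring_nf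
  have hAe : A *ᵥ (xstar - x₀) = r₀ := by
    simp [Matrix.mulVec_sub, r₀]
  have hkey0 : Bᵀ *ᵥ (Sig⁻¹ *ᵥ vstar) = 0 := by
    rw [Matrix.mulVec_mulVec, hBT, hvstar, Matrix.mulVec_sub, Matrix.mulVec_mulVec]
    have h1 : Sᵀ * A * B = M := by
      rw [hB, hM]; simp [Matrix.mul_assoc]
    rw [h1, hcstar, Matrix.mulVec_mulVec, Matrix.mul_nonsing_inv _ hMdet, Matrix.one_mulVec,
      ← Matrix.mulVec_mulVec, hAe, sub_self]
  have key : ∀ w : Fin m → ℝ, (B *ᵥ w) ⬝ᵥ (Sig⁻¹ *ᵥ vstar) = 0 := by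
    intro w
    rw [dotProduct_comm, Matrix.dotProduct_mulVec, ← Matrix.mulVec_transpose, hkey0,
      zero_dotProduct]
  -- symmetry of Sig⁻¹ as bilinear form
  have hsym : ∀ a b : Fin d → ℝ, a ⬝ᵥ (Sig⁻¹ *ᵥ b) = b ⬝ᵥ (Sig⁻¹ *ᵥ a) := by
    intro a b
    rw [Matrix.dotProduct_mulVec, ← Matrix.mulVec_transpose, hSinvT, dotProduct_comm]
  -- quadratic expansion
  have q_expand : ∀ c : Fin m → ℝ,
      (x₀ + B *ᵥ c - xstar) ⬝ᵥ (Sig⁻¹ *ᵥ (x₀ + B *ᵥ c - xstar))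
        = (B *ᵥ (c - cstar)) ⬝ᵥ (Sig⁻¹ *ᵥ (B *ᵥ (c - cstar)))
          + vstar ⬝ᵥ (Sig⁻¹ *ᵥ vstar) := by
    intro c
    have hdecomp : x₀ + B *ᵥ c - xstar = B *ᵥ (c - cstar) + vstar := by
      rw [Matrix.mulVec_sub, hvstar]; ring_nf
    rw [hdecomp, Matrix.mulVec_add, dotProduct_add, add_dotProduct, add_dotProduct,
      key, hsym vstar (B *ᵥ (c - cstar)), key]
    ring
  have hq0 : ∀ v : Fin d → ℝ, 0 ≤ v ⬝ᵥ (Sig⁻¹ *ᵥ v) := by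
    intro v
    rcases eq_or_ne v 0 with h | h
    · simp [h]
    · have := hSinv.dotProduct_mulVec_pos h
      simpa using this.le
  constructor
  · intro c
    simp only [f]
    apply Real.sqrt_le_sqrt
    have h1 := q_expand c
    have h2 := hq0 (B *ᵥ (c - cstar))
    have hxm' : xm - xstar = vstar := hxm
    calc (xm - xstar) ⬝ᵥ (Sig⁻¹ *ᵥ (xm - xstar)) = vstar ⬝ᵥ (Sig⁻¹ *ᵥ vstar) := by rw [hxm']
      _ ≤ _ := by rw [show x₀ + B *ᵥ c - xstar = x₀ + B *ᵥ c - xstar from rfl, h1]; linarith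
  · intro c hc
    simp only [f] at hc
    have h1 := q_expand c
    have h2 := hq0 (B *ᵥ (c - cstar))
    have h3 := hq0 vstar
    have h4 := hq0 (x₀ + B *ᵥ c - xstar)
    have heq : (x₀ + B *ᵥ c - xstar) ⬝ᵥ (Sig⁻¹ *ᵥ (x₀ + B *ᵥ c - xstar))
        = (xm - xstar) ⬝ᵥ (Sig⁻¹ *ᵥ (xm - xstar)) :=
      (Real.sqrt_inj h4 (hq0 _)).mp hc
    rw [hxm, h1] at heq
    have hzero : (B *ᵥ (c - cstar)) ⬝ᵥ (Sig⁻¹ *ᵥ (B *ᵥ (c - cstar))) = 0 := by linarith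
    have hw : B *ᵥ (c - cstar) = 0 := by
      by_contra h
      exact absurd hzero (by simpa using (hSinv.dotProduct_mulVec_pos h).ne')
    have : B *ᵥ c = B *ᵥ cstar := by
      have := hw
      rw [Matrix.mulVec_sub, sub_eq_zero] at this
      exact this
    simp only [xm, ← hM, ← hcstar, ← hB, this]
end

section
/- Let Xₘ, Uₘ ∈ ℝ^{d×m} each have linearly independent columns and suppose Z = Xₘᵀ Aᵀ Uₘ is invertible. Then the projection-method iterate xₘ = x₀ + Xₘ (Uₘᵀ A Xₘ)⁻¹ Uₘᵀ (b − A x₀) equals the SBI posterior mean x₀ + Σ₀ Aᵀ Uₘ (Uₘᵀ A Σ₀ Aᵀ Uₘ)⁻¹ Uₘᵀ (b − A x₀) where Σ₀ = Xₘ Xₘᵀ. -/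
open Matrix

/-- every projection method is the SBI posterior mean under the prior
covariance `Σ₀ = Xₘ Xₘᵀ` with search directions `Sₘ = Uₘ`. -/
theorem projection_method_is_sbi
    (d m : ℕ) (A : Matrix (Fin d) (Fin d) ℝ) (X U : Matrix (Fin d) (Fin m) ℝ)
    (x₀ b : Fin d → ℝ)
    (hA : IsUnit A)
    (hX : LinearIndependent ℝ (fun j : Fin m => Xᵀ j))
    (hU : LinearIndependent ℝ (fun j : Fin m => Uᵀ j))
    (hZ : IsUnit (Xᵀ * Aᵀ * U)) :
    let r₀ := b - A *ᵥ x₀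
    let Sig := X * Xᵀ
    x₀ + X *ᵥ ((Uᵀ * A * X)⁻¹ *ᵥ (Uᵀ *ᵥ r₀)) =
      x₀ + (Sig * Aᵀ * U) *ᵥ ((Uᵀ * A * Sig * Aᵀ * U)⁻¹ *ᵥ (Uᵀ *ᵥ r₀)) := by
  intro r₀ Sig
  set M : Matrix (Fin m) (Fin m) ℝ := Uᵀ * A * X with hM
  have hMT : Mᵀ = Xᵀ * Aᵀ * U := by
    simp [hM, Matrix.transpose_mul, Matrix.mul_assoc]
  have hZT : IsUnit Mᵀ := hMT ▸ hZ
  have hdet : IsUnit Mᵀ.det := (Matrix.isUnit_iff_isUnit_det _).mp hZT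
  have h1 : Uᵀ * A * Sig * Aᵀ * U = M * Mᵀ := by
    simp [Sig, hM, hMT, Matrix.mul_assoc]
  have h2 : Sig * Aᵀ * U = X * Mᵀ := by
    simp [Sig, hMT, Matrix.mul_assoc]
  have key : (Sig * Aᵀ * U) * (Uᵀ * A * Sig * Aᵀ * U)⁻¹ = X * M⁻¹ := by
    rw [h1, h2, Matrix.mul_inv_rev, Matrix.mul_assoc, ← Matrix.mul_assoc Mᵀ,
      Matrix.mul_nonsing_inv _ hdet, Matrix.one_mul]
  congr 1
  rw [Matrix.mulVec_mulVec, Matrix.mulVec_mulVec, Matrix.mulVec_mulVec, Matrix.mulVec_mulVec, key]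
end

section
/- Let Xₘ, Uₘ ∈ ℝ^{d×m}, suppose Uₘ = R Xₘ for an invertible matrix R ∈ ℝ^{d×d} such that Aᵀ R is symmetric positive-definite, and suppose Uₘᵀ A Xₘ is invertible. Then with Σ₀ = (Aᵀ R)⁻¹ and Sₘ = Uₘ, the projection-method iterate x₀ + Xₘ (Uₘᵀ A Xₘ)⁻¹ Uₘᵀ (b − A x₀) equals the SBI posterior mean x₀ + Σ₀ Aᵀ Sₘ (Sₘᵀ A Σ₀ Aᵀ Sₘ)⁻¹ Sₘᵀ (b − A x₀). -/
open Matrix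

/-- if `Uₘ = R Xₘ` with `R` invertible and `Aᵀ R` symmetric positive-definite,
then the projection-method iterate equals the SBI posterior mean under the prior covariance
`Σ₀ = (Aᵀ R)⁻¹` with search directions `Sₘ = Uₘ`. -/
theorem restrictive_projection_method_prior
    (d m : ℕ) (A R : Matrix (Fin d) (Fin d) ℝ) (X U : Matrix (Fin d) (Fin m) ℝ)
    (x₀ b : Fin d → ℝ)
    (hA : IsUnit A) (hR : IsUnit R)
    (hU : U = R * X)
    (hATR : (Aᵀ * R).PosDef) (hATRsym : (Aᵀ * R).IsSymm)
    (hZ : IsUnit (Uᵀ * A * X)) :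
    let r₀ := b - A *ᵥ x₀
    let Sig := (Aᵀ * R)⁻¹
    x₀ + X *ᵥ ((Uᵀ * A * X)⁻¹ *ᵥ (Uᵀ *ᵥ r₀)) =
      x₀ + (Sig * Aᵀ * U) *ᵥ ((Uᵀ * A * Sig * Aᵀ * U)⁻¹ *ᵥ (Uᵀ *ᵥ r₀)) := by
  intro r₀ Sig
  have hinv : IsUnit (Aᵀ * R) := hATR.isUnit
  have h1 : Sig * (Aᵀ * R) = 1 := nonsing_inv_mul _ (isUnit_iff_ne_zero.mpr hATR.det_pos.ne')
  have key : Sig * Aᵀ * U = X := by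
    rw [hU, Matrix.mul_assoc Sig, ← Matrix.mul_assoc Aᵀ, ← Matrix.mul_assoc Sig, h1,
      Matrix.one_mul]
  have key2 : Uᵀ * A * Sig * Aᵀ * U = Uᵀ * A * X := by
    rw [Matrix.mul_assoc (Uᵀ * A * Sig), Matrix.mul_assoc (Uᵀ * A),
      ← Matrix.mul_assoc Sig, key]
  rw [key, key2]
end

section
/- Let A be an invertible d×d real matrix with polar decomposition A = P H, where P is orthogonal and H is symmetric positive-definite. If Uₘ = P Xₘ and Uₘᵀ A Xₘ is invertible, then with prior covariance Σ₀ = H⁻¹ and search directions Sₘ = Uₘ = P Xₘ, the projection-method iterate x₀ + Xₘ (Uₘᵀ A Xₘ)⁻¹ Uₘᵀ (b − A x₀) equals the SBI posterior mean x₀ + Σ₀ Aᵀ Sₘ (Sₘᵀ A Σ₀ Aᵀ Sₘ)⁻¹ Sₘᵀ (b − A x₀). -/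
open Matrix

/-- with `A = P H` the polar decomposition (`P` orthogonal, `H` symmetric
positive-definite) and `Uₘ = P Xₘ`, the projection-method iterate equals the SBI posterior
mean under the prior covariance `Σ₀ = H⁻¹` with search directions `Sₘ = Uₘ = P Xₘ`. -/
theorem polar_decomposition_prior
    (d m : ℕ) (A P H : Matrix (Fin d) (Fin d) ℝ) (X U : Matrix (Fin d) (Fin m) ℝ)
    (x₀ b : Fin d → ℝ)
    (hA : IsUnit A)
    (hpolar : A = P * H) (hP : Pᵀ * P = 1) (hH : H.PosDef) (hHsym : H.IsSymm)
    (hU : U = P * X)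
    (hZ : IsUnit (Uᵀ * A * X)) :
    let r₀ := b - A *ᵥ x₀
    let Sig := H⁻¹
    x₀ + X *ᵥ ((Uᵀ * A * X)⁻¹ *ᵥ (Uᵀ *ᵥ r₀)) =
      x₀ + (Sig * Aᵀ * U) *ᵥ ((Uᵀ * A * Sig * Aᵀ * U)⁻¹ *ᵥ (Uᵀ *ᵥ r₀)) := by
  intro r₀ Sig
  have hHinv := hH.det_pos.ne'.isUnit
  have key : Sig * Aᵀ * U = X := by
    have : Sig * Aᵀ * U = H⁻¹ * (H * (Pᵀ * P * X)) := by
      simp only [Sig, hpolar, hU, Matrix.transpose_mul, hHsym.eq]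
      simp [Matrix.mul_assoc]
    rw [this, hP, Matrix.nonsing_inv_mul_cancel_left _ _ hH.det_pos.ne'.isUnit]
    simp
  have key2 : Uᵀ * A * Sig * Aᵀ * U = Uᵀ * A * X := by
    calc Uᵀ * A * Sig * Aᵀ * U = Uᵀ * A * (Sig * Aᵀ * U) := by simp [Matrix.mul_assoc]
    _ = Uᵀ * A * X := by rw [key]
  rw [key, key2]
end

section
/- Let A ∈ ℝ^{d×d} be invertible and Qₘ ∈ ℝ^{d×m} have linearly independent columns. Then with prior covariance Σ₀ = (AᵀA)⁻¹ and search directions Sₘ = A Qₘ, the SBI posterior mean x₀ + Σ₀ Aᵀ Sₘ (Sₘᵀ A Σ₀ Aᵀ Sₘ)⁻¹ Sₘᵀ (b − A x₀) equals the GMRES iterate x₀ + Qₘ (Qₘᵀ Aᵀ A Qₘ)⁻¹ Qₘᵀ Aᵀ (b − A x₀). -/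
open Matrix

/-- with prior covariance `Σ₀ = (AᵀA)⁻¹` and search directions `Sₘ = A Qₘ`,
the SBI posterior mean equals the GMRES iterate. -/
theorem sbi_gmres
    (d m : ℕ) (A : Matrix (Fin d) (Fin d) ℝ) (Q : Matrix (Fin d) (Fin m) ℝ)
    (x₀ b : Fin d → ℝ)
    (hA : IsUnit A)
    (hQ : LinearIndependent ℝ (fun j : Fin m => Qᵀ j)) :
    let Sig := (Aᵀ * A)⁻¹
    let S := A * Q
    let r₀ := b - A *ᵥ x₀
    x₀ + (Sig * Aᵀ * S) *ᵥ ((Sᵀ * A * Sig * Aᵀ * S)⁻¹ *ᵥ (Sᵀ *ᵥ r₀)) =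
      x₀ + Q *ᵥ ((Qᵀ * Aᵀ * A * Q)⁻¹ *ᵥ (Qᵀ *ᵥ (Aᵀ *ᵥ r₀))) := by
  intro Sig S r₀
  have hdet : IsUnit (Aᵀ * A).det := by
    rw [Matrix.det_mul, Matrix.det_transpose]
    exact ((Matrix.isUnit_iff_isUnit_det A).mp hA).mul ((Matrix.isUnit_iff_isUnit_det A).mp hA)
  have hinv : (Aᵀ * A)⁻¹ * (Aᵀ * A) = 1 := Matrix.nonsing_inv_mul _ hdet
  have e1 : Sig * Aᵀ * S = Q := by
    show (Aᵀ * A)⁻¹ * Aᵀ * (A * Q) = Q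
    rw [Matrix.mul_assoc, ← Matrix.mul_assoc Aᵀ A Q, ← Matrix.mul_assoc, hinv,
      Matrix.one_mul]
  have e2 : Sᵀ * A * Sig * Aᵀ * S = Qᵀ * Aᵀ * A * Q := by
    have : Sᵀ * A = Qᵀ * Aᵀ * A := by
      show (A * Q)ᵀ * A = Qᵀ * Aᵀ * A
      rw [Matrix.transpose_mul]
    rw [Matrix.mul_assoc (Sᵀ * A * Sig), Matrix.mul_assoc (Sᵀ * A)]
    rw [this]
    congr 1
    rw [← Matrix.mul_assoc]
    exact e1
  have e3 : Sᵀ *ᵥ r₀ = Qᵀ *ᵥ (Aᵀ *ᵥ r₀) := by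
    show (A * Q)ᵀ *ᵥ r₀ = _
    rw [Matrix.transpose_mul, Matrix.mulVec_mulVec]
  rw [e1, e2, e3]
end

section
/- Let A be symmetric positive-definite, Σ₀ symmetric positive-definite, x₀ ∈ ℝ^d, and define recursively: s̃₁ = b − A x₀, s₁ = s̃₁/‖s̃₁‖_{AΣ₀Aᵀ}; for j ≥ 2, s̃ⱼ = b − A x_{j−1} − ⟨b − A x_{j−1}, s_{j−1}⟩_{AΣ₀Aᵀ} s_{j−1} and sⱼ = s̃ⱼ/‖s̃ⱼ‖_{AΣ₀Aᵀ}, where x_j is the SBI posterior mean after conditioning on s₁,…,s_j. Then, assuming no s̃ⱼ vanishes, the set {s₁,…,sₘ} is AΣ₀Aᵀ-orthonormal, i.e., Sₘᵀ A Σ₀ Aᵀ Sₘ = I. -/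
open Matrix

/-- BayesCG search directions: the recursively defined, normalised search
directions `s₁, …, sₘ` are `AΣ₀Aᵀ`-orthonormal. -/
theorem bayescg_directions_orthonormal
    (d m : ℕ) (A Sig : Matrix (Fin d) (Fin d) ℝ)
    (hA : A.PosDef) (hAsym : A.IsSymm) (hSig : Sig.PosDef) (hSigsym : Sig.IsSymm)
    (b x₀ : Fin d → ℝ)
    (st s : ℕ → (Fin d → ℝ)) (x : ℕ → (Fin d → ℝ))
    -- the inner product and norm induced by M = A Σ₀ Aᵀ
    (ip : (Fin d → ℝ) → (Fin d → ℝ) → ℝ)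
    (hip : ∀ v w, ip v w = v ⬝ᵥ ((A * Sig * Aᵀ) *ᵥ w))
    -- matrices of the first j search directions
    (Smat : ∀ j : ℕ, Matrix (Fin d) (Fin j) ℝ)
    (hSmat : ∀ j : ℕ, Smat j = Matrix.of fun i (k : Fin j) => s ((k : ℕ) + 1) i)
    -- recursions
    (hx0 : x 0 = x₀)
    (hst1 : st 1 = b - A *ᵥ x₀)
    (hstj : ∀ j, 2 ≤ j →
      st j = (b - A *ᵥ x (j - 1)) - ip (b - A *ᵥ x (j - 1)) (s (j - 1)) • s (j - 1))
    (hsj : ∀ j, 1 ≤ j → s j = (Real.sqrt (ip (st j) (st j)))⁻¹ • st j)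
    -- xⱼ is the SBI posterior mean after conditioning on s₁, …, sⱼ
    (hxj : ∀ j, 1 ≤ j → x j = x₀ + (Sig * Aᵀ * Smat j) *ᵥ
      (((Smat j)ᵀ * A * Sig * Aᵀ * Smat j)⁻¹ *ᵥ ((Smat j)ᵀ *ᵥ (b - A *ᵥ x₀))))
    -- no direction vanishes
    (hnz : ∀ j, 1 ≤ j → j ≤ m → st j ≠ 0) :
    (Smat m)ᵀ * (A * Sig * Aᵀ) * Smat m = 1 := by
  set M : Matrix (Fin d) (Fin d) ℝ := A * Sig * Aᵀ with hMdef
  set r : ℕ → (Fin d → ℝ) := fun k => b - A *ᵥ x k with hrdef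
  -- basic facts about M
  have hMsym : Mᵀ = M := by
    rw [hMdef, transpose_mul, transpose_mul, transpose_transpose, hSigsym.eq, mul_assoc]
  have hMpd : M.PosDef := by
    refine Matrix.posDef_iff_dotProduct_mulVec.mpr ⟨?_, ?_⟩
    · rw [Matrix.IsHermitian, conjTranspose, hMsym]; ext i j; simp
    · intro v hv
      have hAv : Aᵀ *ᵥ v ≠ 0 := by
        have : Function.Injective (Aᵀ.mulVec) := by
          have : Invertible Aᵀ := hA.transpose.isUnit.invertible
          exact mulVec_injective_of_invertible Aᵀ
        intro h
        exact hv (this (by simpa using h))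
      have : v ⬝ᵥ (M *ᵥ v) = (Aᵀ *ᵥ v) ⬝ᵥ (Sig *ᵥ (Aᵀ *ᵥ v)) := by
        rw [hMdef, ← mulVec_mulVec, ← mulVec_mulVec, dotProduct_mulVec,
          mulVec_transpose]
      simp only [star_trivial]
      rw [this]
      simpa using hSig.dotProduct_mulVec_pos hAv
  -- inner product basics
  have ip_pos : ∀ v, v ≠ 0 → 0 < ip v v := by
    intro v hv
    have := hMpd.dotProduct_mulVec_pos hv
    simpa [hip, star_trivial] using this
  have ip_comm : ∀ v w, ip v w = ip w v := by
    intro v w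
    rw [hip, hip, dotProduct_mulVec, ← mulVec_transpose, hMsym, dotProduct_comm]
  have ip_sub_right : ∀ v w u, ip v (w - u) = ip v w - ip v u := by
    intro v w u; simp [hip, mulVec_sub, dotProduct_sub]
  have ip_smul_right : ∀ (c : ℝ) v w, ip v (c • w) = c * ip v w := by
    intro c v w; simp [hip, mulVec_smul, dotProduct_smul, smul_eq_mul]
  have ip_smul_left : ∀ (c : ℝ) v w, ip (c • v) w = c * ip v w := by
    intro c v w; simp [hip, smul_dotProduct, smul_eq_mul]
  have ip_zero_left : ∀ w, ip 0 w = 0 := by intro w; simp [hip]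
  -- normalisation
  have norm_one : ∀ j, 1 ≤ j → j ≤ m → ip (s j) (s j) = 1 := by
    intro j h1 h2
    have hq : 0 < ip (st j) (st j) := ip_pos _ (hnz j h1 h2)
    rw [hsj j h1, ip_smul_left, ip_smul_right]
    rw [← mul_assoc, ← Real.sqrt_inv, Real.mul_self_sqrt (by positivity)]
    field_simp
  have s_scale : ∀ j, 1 ≤ j → j ≤ m →
      Real.sqrt (ip (st j) (st j)) • s j = st j := by
    intro j h1 h2
    have hq : 0 < ip (st j) (st j) := ip_pos _ (hnz j h1 h2)
    have hs : Real.sqrt (ip (st j) (st j)) ≠ 0 := by positivity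
    rw [hsj j h1, smul_smul, mul_inv_cancel₀ hs, one_smul]
  -- entries of transposed S applied to vectors
  have coldot : ∀ (n : ℕ) (v : Fin d → ℝ) (q : Fin n),
      ((Smat n)ᵀ *ᵥ v) q = s ((q : ℕ) + 1) ⬝ᵥ v := by
    intro n v q
    simp [hSmat, mulVec, dotProduct]
  -- S *ᵥ w as a linear combination of the columns
  have smul_rep : ∀ (n : ℕ) (w : Fin n → ℝ),
      Smat n *ᵥ w = ∑ q : Fin n, w q • s ((q : ℕ) + 1) := by
    intro n w
    funext p
    simp [hSmat, mulVec, dotProduct, Finset.sum_apply, mul_comm]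
  -- Gram matrix entries
  have gram_entry : ∀ (n : ℕ) (k l : Fin n),
      ((Smat n)ᵀ * M * Smat n) k l = ip (s ((k : ℕ) + 1)) (s ((l : ℕ) + 1)) := by
    intro n k l
    rw [hip]
    simp only [Matrix.mul_apply, hSmat, mulVec, dotProduct, of_apply, transpose_apply,
      Finset.sum_mul, Finset.mul_sum]
    rw [Finset.sum_comm]
    refine Finset.sum_congr rfl fun p _ => Finset.sum_congr rfl fun t _ => by ring
  -- definition of P
  set P : ℕ → Prop := fun n => ∀ i j, 1 ≤ i → i ≤ n → 1 ≤ j → j ≤ n →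
      ip (s i) (s j) = if i = j then 1 else 0 with hPdef
  have gram_one : ∀ n, P n → (Smat n)ᵀ * M * Smat n = 1 := by
    intro n hP
    ext k l
    rw [gram_entry n k l, hP _ _ (by omega) (by omega) (by omega) (by omega)]
    by_cases h : k = l
    · simp [h, Matrix.one_apply]
    · have : ¬ ((k : ℕ) + 1 = (l : ℕ) + 1) := by
        simp only [add_left_inj]; exact fun hc => h (Fin.ext hc)
      simp [Matrix.one_apply, h, this]
      exact fun hc => h (Fin.ext hc)
  -- residual formula
  have resid : ∀ n, P n →
      r n = r 0 - M *ᵥ (Smat n *ᵥ ((Smat n)ᵀ *ᵥ r 0)) := by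
    intro n hP
    have hr0 : r 0 = b - A *ᵥ x₀ := by rw [hrdef]; simp [hx0]
    rcases Nat.eq_zero_or_pos n with h0 | h1
    · subst h0
      have : (Smat 0 *ᵥ ((Smat 0)ᵀ *ᵥ r 0)) = 0 := by
        rw [smul_rep]; simp
      rw [this, mulVec_zero, sub_zero]
    · have hgram : (Smat n)ᵀ * A * Sig * Aᵀ * Smat n = 1 := by
        have : (Smat n)ᵀ * A * Sig * Aᵀ * Smat n = (Smat n)ᵀ * M * Smat n := by
          simp only [hMdef, Matrix.mul_assoc]
        rw [this, gram_one n hP]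
      show b - A *ᵥ x n = _
      rw [hxj n h1, hgram, inv_one, one_mulVec, mulVec_add, mulVec_mulVec, hr0]
      have : A * (Sig * Aᵀ * Smat n) = M * Smat n := by
        simp only [hMdef, Matrix.mul_assoc]
      rw [this, ← mulVec_mulVec, sub_add_eq_sub_sub]
  -- plain orthogonality of residuals to previous directions
  have plainorth : ∀ n, P n → ∀ i, 1 ≤ i → i ≤ n → s i ⬝ᵥ r n = 0 := by
    intro n hP i h1 h2
    have h0 : (Smat n)ᵀ *ᵥ r n = 0 := by
      rw [resid n hP, mulVec_sub, mulVec_mulVec, mulVec_mulVec, mulVec_mulVec,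
        gram_one n hP, Matrix.one_mul, sub_self]
    have := congrFun h0 ⟨i - 1, by omega⟩
    rw [coldot] at this
    simpa [Nat.sub_add_cancel h1] using this
  have hr : ∀ k, r k = b - A *ᵥ x k := fun k => rfl
  have hr0 : r 0 = b - A *ᵥ x₀ := by rw [hr, hx0]
  -- bilinearity over the projection
  have dot_M_rep : ∀ (v : Fin d → ℝ) (k : ℕ) (w : Fin k → ℝ),
      v ⬝ᵥ (M *ᵥ (Smat k *ᵥ w)) = ∑ q : Fin k, w q * ip v (s ((q : ℕ) + 1)) := by
    intro v k w
    rw [smul_rep]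
    have hM : (M *ᵥ ∑ q : Fin k, w q • s ((q : ℕ) + 1))
        = ∑ q : Fin k, w q • (M *ᵥ s ((q : ℕ) + 1)) := by
      rw [← M.mulVecLin_apply, map_sum]
      refine Finset.sum_congr rfl fun q _ => ?_
      simp [Matrix.mulVecLin_apply, mulVec_smul]
    rw [hM]
    simp only [dotProduct, Finset.sum_apply, Pi.smul_apply, smul_eq_mul, Finset.mul_sum, hip]
    rw [Finset.sum_comm]
    exact Finset.sum_congr rfl fun q _ => Finset.sum_congr rfl fun p _ => by ring
  have proj_rep : ∀ (n : ℕ) (v : Fin d → ℝ),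
      Smat n *ᵥ ((Smat n)ᵀ *ᵥ v) = ∑ q : Fin n, (s ((q : ℕ) + 1) ⬝ᵥ v) • s ((q : ℕ) + 1) := by
    intro n v
    rw [smul_rep]
    exact Finset.sum_congr rfl fun q _ => by rw [coldot]
  have hPmono : ∀ n n', n' ≤ n → P n → P n' := by
    intro n n' hle hP i j h1 h2 h3 h4
    exact hP i j h1 (by omega) h3 (by omega)
  -- incremental residual update
  have incr : ∀ k n, P n → 1 ≤ k → k ≤ n →
      r k = r (k - 1) - (s k ⬝ᵥ r 0) • (M *ᵥ s k) := by
    intro k n hP h1 h2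
    obtain ⟨k', rfl⟩ : ∃ k', k = k' + 1 := ⟨k - 1, by omega⟩
    rw [Nat.add_sub_cancel]
    rw [resid (k' + 1) (hPmono n (k' + 1) h2 hP), resid k' (hPmono n k' (by omega) hP)]
    rw [proj_rep, proj_rep, Fin.sum_univ_castSucc]
    simp only [Fin.coe_castSucc, Fin.val_last]
    rw [mulVec_add, sub_add_eq_sub_sub, mulVec_smul]
  -- the coefficients do not vanish
  have alpha_ne : ∀ n, n ≤ m → P n → ∀ k, 1 ≤ k → k ≤ n → s k ⬝ᵥ r 0 ≠ 0 := by
    intro n hnm hP k h1 h2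
    have hsplit : s k ⬝ᵥ r (k - 1) = s k ⬝ᵥ r 0 := by
      rw [resid (k - 1) (hPmono n (k - 1) (by omega) hP), dotProduct_sub,
        dot_M_rep]
      have : ∀ q : Fin (k - 1), ((Smat (k-1))ᵀ *ᵥ r 0) q * ip (s k) (s ((q : ℕ) + 1)) = 0 := by
        intro q
        have hq : (q : ℕ) + 1 ≤ n := by omega
        rw [hP k ((q : ℕ) + 1) h1 h2 (by omega) hq]
        have : k ≠ (q : ℕ) + 1 := by omega
        simp [this]
      rw [Finset.sum_congr rfl fun q _ => this q, Finset.sum_const_zero, sub_zero]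
    rw [← hsplit]
    have hrne : r (k - 1) ≠ 0 := by
      intro hz
      rcases Nat.lt_or_ge k 2 with hk1 | hk2
      · have : k = 1 := by omega
        subst this
        apply hnz 1 le_rfl (by omega)
        rw [hst1, ← hx0, ← hr 0]
        simpa using hz
      · apply hnz k (by omega) (by omega)
        have h := hstj k hk2
        rw [← hr (k - 1), hz] at h
        rw [h, ip_zero_left]
        simp
    have hst_ne : st k ≠ 0 := hnz k h1 (by omega)
    have hq : 0 < ip (st k) (st k) := ip_pos _ hst_ne
    have hsum : st k ⬝ᵥ r (k - 1) = r (k - 1) ⬝ᵥ r (k - 1) := by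
      rcases Nat.lt_or_ge k 2 with hk1 | hk2
      · have : k = 1 := by omega
        subst this
        have : st 1 = r 0 := by rw [hst1, hr0]
        rw [this]
      · have h := hstj k hk2
        rw [← hr (k - 1)] at h
        rw [h, sub_dotProduct, smul_dotProduct,
          plainorth (k - 1) (hPmono n (k - 1) (by omega) hP) (k - 1) (by omega) le_rfl]
        simp
    rw [hsj k h1, smul_dotProduct, hsum]
    have hden : (Real.sqrt (ip (st k) (st k)))⁻¹ ≠ 0 := by positivity
    have hrr : r (k - 1) ⬝ᵥ r (k - 1) ≠ 0 := fun hc => hrne (dotProduct_self_eq_zero.mp hc)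
    exact mul_ne_zero hden hrr
  -- residual span representations
  have r0_span : 1 ≤ m → r 0 = Real.sqrt (ip (st 1) (st 1)) • s 1 := by
    intro h
    rw [s_scale 1 le_rfl h, hst1, hr0]
  have rk_span : ∀ k, 1 ≤ k → k + 1 ≤ m →
      r k = Real.sqrt (ip (st (k + 1)) (st (k + 1))) • s (k + 1) + ip (r k) (s k) • s k := by
    intro k h1 h2
    rw [s_scale (k + 1) (by omega) h2]
    have h := hstj (k + 1) (by omega)
    rw [Nat.add_sub_cancel, ← hr k] at h
    rw [h, sub_add_cancel]
  -- the main induction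
  have key : ∀ n, n ≤ m → P n := by
    intro n
    induction n with
    | zero => intro _ i j h1 h2 _ _; omega
    | succ n IHn =>
      intro hnm
      have hPn : P n := IHn (by omega)
      have horth : ∀ i, 1 ≤ i → i ≤ n → ip (s i) (s (n + 1)) = 0 := by
        intro i hi1 hin
        have hn1 : 1 ≤ n := le_trans hi1 hin
        have hstdef : st (n + 1) = r n - ip (r n) (s n) • s n := by
          have h := hstj (n + 1) (by omega)
          rw [Nat.add_sub_cancel, ← hr n] at h
          exact h
        have hiprn : ip (s i) (r n) - ip (r n) (s n) * ip (s i) (s n) = 0 := by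
          rcases eq_or_lt_of_le hin with heq | hlt
          · rw [heq, hPn n n hn1 le_rfl hn1 le_rfl, ip_comm (s n) (r n)]
            simp
          · have hzn : ip (s i) (s n) = 0 := by
              rw [hPn i n hi1 hin hn1 le_rfl]
              simp [show i ≠ n by omega]
            have hzrn : ip (s i) (r n) = 0 := by
              obtain ⟨i', rfl⟩ : ∃ i', i = i' + 1 := ⟨i - 1, by omega⟩
              have hα : s (i' + 1) ⬝ᵥ r 0 ≠ 0 := alpha_ne n (by omega) hPn (i' + 1) hi1 hin
              have hinc := incr (i' + 1) n hPn hi1 hin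
              rw [Nat.add_sub_cancel] at hinc
              have hri1 : r n ⬝ᵥ r i' = 0 := by
                rcases Nat.eq_zero_or_pos i' with h0 | h1
                · rw [h0, dotProduct_comm, r0_span (by omega), smul_dotProduct,
                    plainorth n hPn 1 le_rfl hn1]
                  simp
                · rw [dotProduct_comm, rk_span i' h1 (by omega), add_dotProduct,
                    smul_dotProduct, smul_dotProduct,
                    plainorth n hPn (i' + 1) (by omega) hin,
                    plainorth n hPn i' (by omega) (by omega)]
                  simp
              have hri : r n ⬝ᵥ r (i' + 1) = 0 := by
                rw [dotProduct_comm, rk_span (i' + 1) (by omega) (by omega), add_dotProduct,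
                  smul_dotProduct, smul_dotProduct,
                  plainorth n hPn (i' + 2) (by omega) (by omega),
                  plainorth n hPn (i' + 1) (by omega) hin]
                simp
              have hd : (s (i' + 1) ⬝ᵥ r 0) * (r n ⬝ᵥ (M *ᵥ s (i' + 1))) = 0 := by
                have h := congrArg (fun v => r n ⬝ᵥ v) hinc
                simp only [dotProduct_sub, dotProduct_smul, smul_eq_mul] at h
                rw [hri1, hri] at h
                linarith
              have hMz : r n ⬝ᵥ (M *ᵥ s (i' + 1)) = 0 := by
                rcases mul_eq_zero.mp hd with h | h
                · exact absurd h hα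
                · exact h
              rw [ip_comm, hip, hMz]
            rw [hzrn, hzn]
            ring
        have hz : ip (s i) (st (n + 1)) = 0 := by
          rw [hstdef, ip_sub_right, ip_smul_right]
          exact hiprn
        rw [hsj (n + 1) (by omega), ip_smul_right, hz, mul_zero]
      intro i j h1 h2 h3 h4
      rcases Nat.lt_or_ge i (n + 1) with hi | hi
      · rcases Nat.lt_or_ge j (n + 1) with hj | hj
        · exact hPn i j h1 (by omega) h3 (by omega)
        · have hj' : j = n + 1 := by omega
          subst hj'
          rw [horth i h1 (by omega)]
          simp [show i ≠ n + 1 by omega]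
      · have hi' : i = n + 1 := by omega
        subst hi'
        rcases Nat.lt_or_ge j (n + 1) with hj | hj
        · rw [ip_comm, horth j h3 (by omega)]
          simp [show (n + 1 : ℕ) ≠ j by omega]
        · have hj' : j = n + 1 := by omega
          subst hj'
          rw [norm_one (n + 1) (by omega) hnm]
          simp
  exact gram_one m (key m le_rfl)
end

section
/- Let A, Σ₀ be symmetric positive-definite d×d matrices and let s₁,…,sₘ be AΣ₀Aᵀ-orthonormal vectors (Sₘᵀ A Σ₀ Aᵀ Sₘ = I). Then the SBI posterior mean and covariance satisfy the rank-one recursions xₘ = x_{m−1} + Σ₀ Aᵀ sₘ (sₘᵀ (b − A x_{m−1})) and Σₘ = Σ_{m−1} − Σ₀ Aᵀ sₘ sₘᵀ A Σ₀, where xₘ = x₀ + Σ₀ Aᵀ Sₘ Sₘᵀ (b − A x₀) and Σₘ = Σ₀ − Σ₀ Aᵀ Sₘ Sₘᵀ A Σ₀. -/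
open Matrix

lemma aux_mul_vecMulVec_mul (d : ℕ) (B D : Matrix (Fin d) (Fin d) ℝ) (u v : Fin d → ℝ) :
    B * vecMulVec u v * D = vecMulVec (B *ᵥ u) (v ᵥ* D) := by
  rw [vecMulVec_eq Unit, vecMulVec_eq Unit, replicateCol_mulVec, replicateRow_vecMul,
    Matrix.mul_assoc, Matrix.mul_assoc, ← Matrix.mul_assoc]

lemma aux_vecMulVec_mulVec (d : ℕ) (u v w : Fin d → ℝ) :
    vecMulVec u v *ᵥ w = (v ⬝ᵥ w) • u := by
  ext i
  simp only [mulVec, vecMulVec_apply, dotProduct, Pi.smul_apply, smul_eq_mul,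
    Finset.sum_mul, Finset.mul_sum]
  exact Finset.sum_congr rfl fun k _ => by ring

/-- under `AΣ₀Aᵀ`-orthonormal search directions the SBI posterior mean and
covariance satisfy rank-one update recursions. -/
theorem bayescg_rank_one_recursion
    (d m : ℕ) (A Sig : Matrix (Fin d) (Fin d) ℝ)
    (hA : A.PosDef) (hAsym : A.IsSymm) (hSig : Sig.PosDef) (hSigsym : Sig.IsSymm)
    (b x₀ : Fin d → ℝ)
    (s : ℕ → (Fin d → ℝ))
    (Smat : ∀ j : ℕ, Matrix (Fin d) (Fin j) ℝ)
    (hSmat : ∀ j : ℕ, Smat j = Matrix.of fun i (k : Fin j) => s ((k : ℕ) + 1) i)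
    -- orthonormality: sᵢᵀ (A Σ₀ Aᵀ) sⱼ = δᵢⱼ for 1 ≤ i, j ≤ m
    (hortho : ∀ i j, 1 ≤ i → i ≤ m → 1 ≤ j → j ≤ m →
      s i ⬝ᵥ ((A * Sig * Aᵀ) *ᵥ s j) = if i = j then 1 else 0)
    -- batch SBI posterior mean and covariance
    (x : ℕ → (Fin d → ℝ)) (C : ℕ → Matrix (Fin d) (Fin d) ℝ)
    (hx : ∀ j, x j = x₀ + (Sig * Aᵀ * Smat j) *ᵥ ((Smat j)ᵀ *ᵥ (b - A *ᵥ x₀)))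
    (hC : ∀ j, C j = Sig - (Sig * Aᵀ * Smat j) * ((Smat j)ᵀ * A * Sig)) :
    ∀ j, 1 ≤ j → j ≤ m →
      x j = x (j - 1) + (s j ⬝ᵥ (b - A *ᵥ x (j - 1))) • ((Sig * Aᵀ) *ᵥ s j) ∧
      C j = C (j - 1) -
        Matrix.vecMulVec ((Sig * Aᵀ) *ᵥ s j) (Matrix.vecMul (s j) (A * Sig)) := by
  intro j hj hjm
  obtain ⟨n, rfl⟩ : ∃ n, j = n + 1 := ⟨j - 1, (Nat.succ_pred_eq_of_pos hj).symm⟩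
  simp only [Nat.add_sub_cancel]
  set r₀ := b - A *ᵥ x₀ with hr₀
  -- Gram matrix splitting
  have hsplit : Smat (n + 1) * (Smat (n + 1))ᵀ
      = Smat n * (Smat n)ᵀ + vecMulVec (s (n + 1)) (s (n + 1)) := by
    ext i i'
    simp only [hSmat, mul_apply, transpose_apply, of_apply, Matrix.add_apply, vecMulVec_apply]
    rw [Fin.sum_univ_castSucc]
    simp
  -- rewrite the batch formulas through the Gram matrix
  have hx' : ∀ k, x k = x₀ + (Sig * Aᵀ) *ᵥ ((Smat k * (Smat k)ᵀ) *ᵥ r₀) := by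
    intro k
    rw [hx k]
    congr 1
    rw [mulVec_mulVec, mulVec_mulVec, Matrix.mul_assoc]
  have hC' : ∀ k, C k = Sig - (Sig * Aᵀ) * (Smat k * (Smat k)ᵀ) * (A * Sig) := by
    intro k
    rw [hC k]
    congr 1
    simp only [Matrix.mul_assoc]
  -- orthogonality: s (n+1) is A Σ Aᵀ-orthogonal to earlier columns
  have hperp : s (n + 1) ᵥ* (A * Sig * Aᵀ) ᵥ* Smat n = 0 := by
    ext k
    have h1 : (s (n + 1) ᵥ* (A * Sig * Aᵀ) ᵥ* Smat n) k
        = (s (n + 1) ᵥ* (A * Sig * Aᵀ)) ⬝ᵥ s ((k : ℕ) + 1) := by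
      simp [vecMul, hSmat, dotProduct]
    rw [h1, ← dotProduct_mulVec, hortho (n + 1) ((k : ℕ) + 1) (Nat.le_add_left 1 n) hjm
      (Nat.le_add_left 1 k) (le_trans (Nat.succ_le_succ (Nat.le_of_lt_succ
        (Nat.lt_succ_of_lt k.isLt))) hjm)]
    have : n + 1 ≠ (k : ℕ) + 1 := by
      have := k.isLt; omega
    simp [this]; omega
  -- the new residual dotted with s (n+1) equals the old one
  have hres : s (n + 1) ⬝ᵥ (b - A *ᵥ x n) = s (n + 1) ⬝ᵥ r₀ := by
    rw [hx' n]
    have : b - A *ᵥ (x₀ + (Sig * Aᵀ) *ᵥ ((Smat n * (Smat n)ᵀ) *ᵥ r₀))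
        = r₀ - A *ᵥ ((Sig * Aᵀ) *ᵥ ((Smat n * (Smat n)ᵀ) *ᵥ r₀)) := by
      rw [mulVec_add, hr₀]; abel
    rw [this, dotProduct_sub]
    have hz : s (n + 1) ⬝ᵥ (A *ᵥ ((Sig * Aᵀ) *ᵥ ((Smat n * (Smat n)ᵀ) *ᵥ r₀))) = 0 := by
      rw [mulVec_mulVec, mulVec_mulVec, ← Matrix.mul_assoc, ← Matrix.mul_assoc]
      rw [dotProduct_mulVec, ← vecMul_vecMul, ← vecMul_vecMul, hperp, zero_vecMul,
        zero_dotProduct]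
    rw [hz, sub_zero]
  constructor
  · -- mean recursion
    rw [hres, hx' (n + 1), hx' n, hsplit, add_mulVec, mulVec_add,
      aux_vecMulVec_mulVec, mulVec_smul]
    abel
  · -- covariance recursion
    rw [hC' (n + 1), hC' n, hsplit, Matrix.mul_add, Matrix.add_mul,
      aux_mul_vecMulVec_mul]
    abel
end

section
/- (Equivalence of left-multiplied MBI and SBI.) Let A ∈ ℝ^{d×d} be invertible, Σ₀, W₀ symmetric positive-definite d×d matrices, b ∈ ℝ^d with bᵀ W₀ b = 1, A₀⁻¹ ∈ ℝ^{d×d} with A₀⁻¹ b = x₀, and Sₘ ∈ ℝ^{d×m} with Yₘ = Aᵀ Sₘ such that Yₘᵀ Σ₀ Yₘ is invertible. Conditioning the Gaussian prior N(vec(A₀⁻¹), Σ₀ ⊗ W₀) on H satisfying Yₘᵀ H = Sₘᵀ gives posterior mean Hₘ = A₀⁻¹ + Σ₀ Yₘ (Yₘᵀ Σ₀ Yₘ)⁻¹ (Sₘᵀ − Yₘᵀ A₀⁻¹) and the implied marginal on x = H b has mean Hₘ b = x₀ + Σ₀ Aᵀ Sₘ (Sₘᵀ A Σ₀ Aᵀ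 Sₘ)⁻¹ Sₘᵀ (b − A x₀) and covariance Σ₀ − Σ₀ Aᵀ Sₘ (Sₘᵀ A Σ₀ Aᵀ Sₘ)⁻¹ Sₘᵀ A Σ₀, i.e., exactly the SBI posterior under prior N(x₀, Σ₀). -/
open Matrix Kronecker

/-- Row-stacking vectorisation of a matrix: `vecr H (i, j) = H i j`. -/
def vecr {d e : ℕ} (H : Matrix (Fin d) (Fin e) ℝ) : Fin d × Fin e → ℝ :=
  fun p => H p.1 p.2

lemma kron_mulVec {a b c e : ℕ} (A : Matrix (Fin a) (Fin c) ℝ) (B : Matrix (Fin b) (Fin e) ℝ)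
    (C : Matrix (Fin c) (Fin e) ℝ) : (A ⊗ₖ B) *ᵥ vecr C = vecr (A * C * Bᵀ) := by
  ext ⟨i, j⟩
  simp only [vecr, Matrix.mulVec, dotProduct, Matrix.mul_apply, Fintype.sum_prod_type,
    kroneckerMap_apply, transpose_apply, Finset.sum_mul, Finset.mul_sum]
  rw [Finset.sum_comm]
  refine Finset.sum_congr rfl fun k _ => Finset.sum_congr rfl fun l _ => by ring

lemma mb_sandwich {d : ℕ} (b : Fin d → ℝ) (C D : Matrix (Fin d) (Fin d) ℝ) :
    (Matrix.of fun i p => if p.1 = i then b p.2 else 0 : Matrix (Fin d) (Fin d × Fin d) ℝ)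
      * (C ⊗ₖ D) *
    (Matrix.of fun i p => if p.1 = i then b p.2 else 0 : Matrix (Fin d) (Fin d × Fin d) ℝ)ᵀ
    = (b ⬝ᵥ (D *ᵥ b)) • C := by
  ext i k
  simp only [Matrix.mul_apply, Matrix.transpose_apply, Matrix.of_apply, Fintype.sum_prod_type,
    kroneckerMap_apply, Matrix.smul_apply, smul_eq_mul, dotProduct, Matrix.mulVec,
    ite_mul, mul_ite, zero_mul, mul_zero, Finset.sum_ite_irrel, Finset.sum_const_zero,
    Finset.sum_ite_eq, Finset.sum_ite_eq', Finset.mem_univ, if_true, Finset.mul_sum,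
    Finset.sum_mul]
  rw [Finset.sum_comm]
  refine Finset.sum_congr rfl fun l _ => Finset.sum_congr rfl fun j _ => by ring

lemma vecr_sub {d e : ℕ} (X Y : Matrix (Fin d) (Fin e) ℝ) :
    vecr X - vecr Y = vecr (X - Y) := rfl

lemma vecr_add {d e : ℕ} (X Y : Matrix (Fin d) (Fin e) ℝ) :
    vecr X + vecr Y = vecr (X + Y) := rfl

/-- equivalence of left-multiplied MBI and SBI: conditioning the Gaussian
prior `N(vec(A₀⁻¹), Σ₀ ⊗ W₀)` on the linear observations `Yₘᵀ H = Sₘᵀ` (written in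
vectorised form via `P = Yₘ ⊗ I`) gives the posterior mean
`Hₘ = A₀⁻¹ + Σ₀ Yₘ (Yₘᵀ Σ₀ Yₘ)⁻¹ (Sₘᵀ − Yₘᵀ A₀⁻¹)`, and the implied marginal on `x = H b`
has exactly the SBI posterior mean and covariance under the prior `N(x₀, Σ₀)`. -/
theorem mbi_left_equals_sbi
    (d m : ℕ) (A Sig W Ainv₀ : Matrix (Fin d) (Fin d) ℝ)
    (S : Matrix (Fin d) (Fin m) ℝ) (b x₀ : Fin d → ℝ)
    (hA : IsUnit A)
    (hSig : Sig.PosDef) (hSigsym : Sig.IsSymm)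
    (hW : W.PosDef) (hWsym : W.IsSymm)
    (hWb : b ⬝ᵥ (W *ᵥ b) = 1)
    (hmean : Ainv₀ *ᵥ b = x₀) :
    let Y := Aᵀ * S
    -- Gaussian conditioning in vectorised (Kronecker) form
    let Ω₀ : Matrix (Fin d × Fin d) (Fin d × Fin d) ℝ := Sig ⊗ₖ W
    let P : Matrix (Fin m × Fin d) (Fin d × Fin d) ℝ :=
      Yᵀ ⊗ₖ (1 : Matrix (Fin d) (Fin d) ℝ)
    let μpost : Fin d × Fin d → ℝ := vecr Ainv₀ +
      (Ω₀ * Pᵀ) *ᵥ ((P * Ω₀ * Pᵀ)⁻¹ *ᵥ (vecr Sᵀ - P *ᵥ vecr Ainv₀))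
    let Ωpost : Matrix (Fin d × Fin d) (Fin d × Fin d) ℝ :=
      Ω₀ - (Ω₀ * Pᵀ) * (P * Ω₀ * Pᵀ)⁻¹ * (P * Ω₀)
    -- the matrix-valued posterior mean
    let Hm := Ainv₀ + Sig * Y * (Yᵀ * Sig * Y)⁻¹ * (Sᵀ - Yᵀ * Ainv₀)
    -- the projection onto solution space `x = H b`
    let Mb : Matrix (Fin d) (Fin d × Fin d) ℝ :=
      Matrix.of fun i p => if p.1 = i then b p.2 else 0
    IsUnit (Yᵀ * Sig * Y) →
      (μpost = vecr Hm ∧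
        Hm *ᵥ b = x₀ + (Sig * Aᵀ * S) *ᵥ
          ((Sᵀ * A * Sig * Aᵀ * S)⁻¹ *ᵥ (Sᵀ *ᵥ (b - A *ᵥ x₀))) ∧
        Mb * Ωpost * Mbᵀ =
          Sig - Sig * Aᵀ * S * (Sᵀ * A * Sig * Aᵀ * S)⁻¹ * Sᵀ * A * Sig) := by
  intro Y Ω₀ P μpost Ωpost Hm Mb hYSY
  have hWu : IsUnit W := hW.isUnit
  -- basic Kronecker computations
  have hPt : Pᵀ = Y ⊗ₖ (1 : Matrix (Fin d) (Fin d) ℝ) := by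
    show (Yᵀ ⊗ₖ (1 : Matrix (Fin d) (Fin d) ℝ))ᵀ = Y ⊗ₖ (1 : Matrix (Fin d) (Fin d) ℝ)
    rw [← Matrix.kroneckerMap_transpose]
    simp
  have hΩPt : Ω₀ * Pᵀ = (Sig * Y) ⊗ₖ W := by
    rw [hPt]
    show Sig ⊗ₖ W * Y ⊗ₖ (1 : Matrix (Fin d) (Fin d) ℝ) = (Sig * Y) ⊗ₖ W
    rw [← Matrix.mul_kronecker_mul, Matrix.mul_one]
  have hPΩ : P * Ω₀ = (Yᵀ * Sig) ⊗ₖ W := by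
    show Yᵀ ⊗ₖ (1 : Matrix (Fin d) (Fin d) ℝ) * Sig ⊗ₖ W = (Yᵀ * Sig) ⊗ₖ W
    rw [← Matrix.mul_kronecker_mul, Matrix.one_mul]
  have hPΩPt : P * Ω₀ * Pᵀ = (Yᵀ * Sig * Y) ⊗ₖ W := by
    rw [hPΩ, hPt, ← Matrix.mul_kronecker_mul, Matrix.mul_one]
  have hinv : (P * Ω₀ * Pᵀ)⁻¹ = (Yᵀ * Sig * Y)⁻¹ ⊗ₖ W⁻¹ := by
    rw [hPΩPt, Matrix.inv_kronecker]
  have hgain : (Ω₀ * Pᵀ) * (P * Ω₀ * Pᵀ)⁻¹ =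
      (Sig * Y * (Yᵀ * Sig * Y)⁻¹) ⊗ₖ (1 : Matrix (Fin d) (Fin d) ℝ) := by
    rw [hΩPt, hinv, ← Matrix.mul_kronecker_mul,
      Matrix.mul_nonsing_inv _ ((Matrix.isUnit_iff_isUnit_det _).1 hWu)]
  have hYt : Yᵀ = Sᵀ * A := by
    show (Aᵀ * S)ᵀ = _
    rw [Matrix.transpose_mul, Matrix.transpose_transpose]
  have hYSY' : Yᵀ * Sig * Y = Sᵀ * A * Sig * Aᵀ * S := by
    rw [hYt]; show Sᵀ * A * Sig * (Aᵀ * S) = _; rw [← Matrix.mul_assoc]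
  refine ⟨?_, ?_, ?_⟩
  · -- posterior mean
    show vecr Ainv₀ + (Ω₀ * Pᵀ) *ᵥ ((P * Ω₀ * Pᵀ)⁻¹ *ᵥ (vecr Sᵀ - P *ᵥ vecr Ainv₀)) = vecr Hm
    have hPv : P *ᵥ vecr Ainv₀ = vecr (Yᵀ * Ainv₀) := by
      show (Yᵀ ⊗ₖ (1 : Matrix (Fin d) (Fin d) ℝ)) *ᵥ vecr Ainv₀ = _
      rw [kron_mulVec]; simp
    rw [hPv, vecr_sub, Matrix.mulVec_mulVec, hgain, kron_mulVec]
    simp only [Matrix.transpose_one, Matrix.mul_one]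
    rw [vecr_add]
  · -- mean of x = H b
    show (Ainv₀ + Sig * Y * (Yᵀ * Sig * Y)⁻¹ * (Sᵀ - Yᵀ * Ainv₀)) *ᵥ b = _
    rw [Matrix.add_mulVec, hmean]
    congr 1
    have hv : (Sᵀ - Yᵀ * Ainv₀) *ᵥ b = Sᵀ *ᵥ (b - A *ᵥ x₀) := by
      rw [hYt, Matrix.sub_mulVec, Matrix.mulVec_sub, ← hmean,
        ← Matrix.mulVec_mulVec, ← Matrix.mulVec_mulVec]
    have hM : Sig * Y * (Yᵀ * Sig * Y)⁻¹ * Sᵀ =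
        Sig * Aᵀ * S * (Sᵀ * A * Sig * Aᵀ * S)⁻¹ * Sᵀ := by
      rw [hYSY']
      show Sig * (Aᵀ * S) * (Sᵀ * A * Sig * Aᵀ * S)⁻¹ * Sᵀ =
        Sig * Aᵀ * S * (Sᵀ * A * Sig * Aᵀ * S)⁻¹ * Sᵀ
      rw [← Matrix.mul_assoc Sig Aᵀ S]
    rw [← Matrix.mulVec_mulVec, hv, Matrix.mulVec_mulVec, Matrix.mulVec_mulVec,
      Matrix.mulVec_mulVec, hM]
  · -- covariance
    show Mb * (Ω₀ - (Ω₀ * Pᵀ) * (P * Ω₀ * Pᵀ)⁻¹ * (P * Ω₀)) * Mbᵀ = _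
    have hcorr : (Ω₀ * Pᵀ) * (P * Ω₀ * Pᵀ)⁻¹ * (P * Ω₀) =
        (Sig * Y * (Yᵀ * Sig * Y)⁻¹ * (Yᵀ * Sig)) ⊗ₖ W := by
      rw [hgain, hPΩ, ← Matrix.mul_kronecker_mul, Matrix.one_mul, ← Matrix.mul_assoc]
    rw [hcorr, Matrix.mul_sub, Matrix.sub_mul]
    show (Matrix.of fun i p => if p.1 = i then b p.2 else 0 : Matrix (Fin d) (Fin d × Fin d) ℝ)
        * (Sig ⊗ₖ W) *
        (Matrix.of fun i p => if p.1 = i then b p.2 else 0 : Matrix (Fin d) (Fin d × Fin d) ℝ)ᵀ -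
        (Matrix.of fun i p => if p.1 = i then b p.2 else 0 : Matrix (Fin d) (Fin d × Fin d) ℝ)
        * ((Sig * Y * (Yᵀ * Sig * Y)⁻¹ * (Yᵀ * Sig)) ⊗ₖ W) *
        (Matrix.of fun i p => if p.1 = i then b p.2 else 0 : Matrix (Fin d) (Fin d × Fin d) ℝ)ᵀ = _
    rw [mb_sandwich, mb_sandwich, hWb, one_smul, one_smul]
    congr 1
    rw [hYSY', hYt]
    show Sig * (Aᵀ * S) * (Sᵀ * A * Sig * Aᵀ * S)⁻¹ * (Sᵀ * A * Sig) = _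
    rw [← Matrix.mul_assoc, ← Matrix.mul_assoc, ← Matrix.mul_assoc]
end

section
/- In Algorithm 1 (the MBI solver with symmetric posterior mean estimates), if A is symmetric positive-definite, each posterior mean Aᵢ⁻¹ is a symmetric matrix consistent with the observations (Aᵢ⁻¹ zₖ = dₖ for all k ≤ i), and no direction dᵢ vanishes, then the produced directions d₁,…,dₘ are pairwise A-conjugate: dₖᵀ A dᵢ = 0 for all k < i. -/
open Matrix

/-- Lemma on A-conjugacy of Algorithm 1: if every posterior mean estimate
`Aᵢ⁻¹` is symmetric and consistent with the observations (`Aᵢ⁻¹ zₖ = dₖ` for `k ≤ i`), `A`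
is symmetric positive-definite and no direction vanishes, then the directions `d₁, …, dₘ`
produced by Algorithm 1 are pairwise `A`-conjugate. -/
theorem algorithm1_conjugate_directions
    (dim m : ℕ) (A : Matrix (Fin dim) (Fin dim) ℝ)
    (hA : A.PosDef) (hAsym : A.IsSymm)
    (b : Fin dim → ℝ)
    (Ainv : ℕ → Matrix (Fin dim) (Fin dim) ℝ)
    (x r dvec z s y : ℕ → (Fin dim → ℝ)) (α : ℕ → ℝ)
    -- Algorithm 1 recursions
    (hx0 : x 0 = Ainv 0 *ᵥ b)
    (hr0 : r 0 = A *ᵥ x 0 - b)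
    (hd : ∀ i, 1 ≤ i → dvec i = -(Ainv (i - 1) *ᵥ r (i - 1)))
    (hz : ∀ i, 1 ≤ i → z i = A *ᵥ dvec i)
    (hα : ∀ i, 1 ≤ i → α i = -(dvec i ⬝ᵥ r (i - 1)) / (dvec i ⬝ᵥ z i))
    (hs : ∀ i, 1 ≤ i → s i = α i • dvec i)
    (hy : ∀ i, 1 ≤ i → y i = α i • z i)
    (hxi : ∀ i, 1 ≤ i → x i = x (i - 1) + s i)
    (hr : ∀ i, 1 ≤ i → r i = r (i - 1) + y i)
    -- posterior means are symmetric and consistent with the observations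
    (hsym : ∀ i, (Ainv i)ᵀ = Ainv i)
    (hcons : ∀ i k, 1 ≤ k → k ≤ i → Ainv i *ᵥ z k = dvec k)
    -- no direction vanishes
    (hnz : ∀ i, 1 ≤ i → i ≤ m → dvec i ≠ 0) :
    ∀ k i, 1 ≤ k → k < i → i ≤ m → dvec k ⬝ᵥ (A *ᵥ dvec i) = 0 := by

  -- `step`: for k < i, dₖᵀ A dᵢ = −dₖᵀ r_{i−1}
  have step : ∀ i k, 1 ≤ k → k < i →
      dvec k ⬝ᵥ (A *ᵥ dvec i) = -(dvec k ⬝ᵥ r (i - 1)) := by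
    intro i k hk hki
    have hi : 1 ≤ i := le_of_lt (lt_of_le_of_lt hk hki)
    calc dvec k ⬝ᵥ (A *ᵥ dvec i)
        = (dvec k ᵥ* A) ⬝ᵥ dvec i := by rw [dotProduct_mulVec]
      _ = (Aᵀ *ᵥ dvec k) ⬝ᵥ dvec i := by rw [Matrix.mulVec_transpose]
      _ = (A *ᵥ dvec k) ⬝ᵥ dvec i := by rw [hAsym]
      _ = z k ⬝ᵥ dvec i := by rw [hz k hk]
      _ = z k ⬝ᵥ (-(Ainv (i - 1) *ᵥ r (i - 1))) := by rw [hd i hi]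
      _ = -(z k ⬝ᵥ (Ainv (i - 1) *ᵥ r (i - 1))) := by rw [dotProduct_neg]
      _ = -((z k ᵥ* Ainv (i - 1)) ⬝ᵥ r (i - 1)) := by rw [dotProduct_mulVec]
      _ = -(((Ainv (i - 1))ᵀ *ᵥ z k) ⬝ᵥ r (i - 1)) := by rw [Matrix.mulVec_transpose]
      _ = -((Ainv (i - 1) *ᵥ z k) ⬝ᵥ r (i - 1)) := by rw [hsym]
      _ = -(dvec k ⬝ᵥ r (i - 1)) := by
            rw [hcons (i - 1) k hk (by omega)]
  -- `key`: residual orthogonality dₖᵀ r_j = 0 for 1 ≤ k ≤ j ≤ m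
  have key : ∀ j, ∀ k, 1 ≤ k → k ≤ j → j ≤ m → dvec k ⬝ᵥ r j = 0 := by
    intro j
    induction j using Nat.strong_induction_on with
    | _ j ih =>
      intro k hk1 hkj hjm
      have hj1 : 1 ≤ j := le_trans hk1 hkj
      rw [hr j hj1, hy j hj1, dotProduct_add, dotProduct_smul, smul_eq_mul]
      rcases eq_or_lt_of_le hkj with heq | hlt
      · -- k = j
        subst heq
        have hzz : (0:ℝ) < dvec k ⬝ᵥ z k := by
          have := (posDef_iff_dotProduct_mulVec.mp hA).2 (hnz k hk1 hjm)
          rw [hz k hj1]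
          simpa using this
        rw [hα k hj1]
        field_simp
        ring
      · -- k < j
        have h1 : dvec k ⬝ᵥ r (j - 1) = 0 :=
          ih (j - 1) (by omega) k hk1 (by omega) (by omega)
        have h2 : dvec k ⬝ᵥ z j = 0 := by
          rw [hz j hj1, step j k hk1 hlt, h1, neg_zero]
        rw [h1, h2, mul_zero, add_zero]
  intro k i hk hki him
  rw [step i k hk hki, key (i - 1) k hk (by omega) (by omega), neg_zero]
end

section
/- Let A and Σ₀ be symmetric positive-definite, and suppose the search directions Sₘ are AΣ₀Aᵀ-orthonormal with span equal to the Krylov space constraint; then the SBI/BayesCG posterior mean satisfies the optimality property xₘ = argmin over x ∈ x₀ + Kₘ(Σ₀AᵀA, Σ₀Aᵀr₀) of ‖x − x*‖_{Σ₀⁻¹}, as a special case of the general optimality of the SBI posterior mean over x₀ + range(Σ₀AᵀSₘ) when range(Sₘ) is chosen so that range(Σ₀AᵀSₘ) = Kₘ(Σ₀AᵀA, Σ₀Aᵀr₀). -/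
open Matrix

/-- BayesCG optimality: if `range(Σ₀AᵀSₘ) = Kₘ(Σ₀AᵀA, Σ₀Aᵀr₀)` and the
search directions are `AΣ₀Aᵀ`-orthonormal, then the SBI/BayesCG posterior mean is the
unique minimizer of `‖x − x*‖_{Σ₀⁻¹}` over `x₀ + Kₘ(Σ₀AᵀA, Σ₀Aᵀr₀)`. -/
theorem bayescg_krylov_optimality
    (d m : ℕ) (A Sig : Matrix (Fin d) (Fin d) ℝ) (S : Matrix (Fin d) (Fin m) ℝ)
    (x₀ b xstar : Fin d → ℝ)
    (hA : A.PosDef) (hAsym : A.IsSymm) (hSig : Sig.PosDef) (hSigsym : Sig.IsSymm)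
    (hxstar : A *ᵥ xstar = b)
    (hortho : Sᵀ * (A * Sig * Aᵀ) * S = 1) :
    let r₀ := b - A *ᵥ x₀
    let K : Submodule ℝ (Fin d → ℝ) := Submodule.span ℝ
      (Set.range fun i : Fin m => ((Sig * Aᵀ * A) ^ (i : ℕ)) *ᵥ ((Sig * Aᵀ) *ᵥ r₀))
    let xm := x₀ + (Sig * Aᵀ * S) *ᵥ ((Sᵀ * A * Sig * Aᵀ * S)⁻¹ *ᵥ (Sᵀ *ᵥ r₀))
    let f := fun x : Fin d → ℝ => Real.sqrt ((x - xstar) ⬝ᵥ (Sig⁻¹ *ᵥ (x - xstar)))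
    LinearMap.range (Matrix.mulVecLin (Sig * Aᵀ * S)) = K →
      (∀ v ∈ K, f xm ≤ f (x₀ + v)) ∧
        (∀ v ∈ K, f (x₀ + v) = f xm → x₀ + v = xm) := by
  intro r₀ K xm f hK
  -- basic facts
  have hSigInv : Sig⁻¹ * Sig = 1 :=
    Matrix.nonsing_inv_mul _ (isUnit_iff_ne_zero.2 hSig.det_pos.ne')
  have hSigInvSym : (Sig⁻¹)ᵀ = Sig⁻¹ := by
    have := hSig.inv.1
    simpa [Matrix.IsHermitian] using this
  have hone : Sᵀ * A * Sig * Aᵀ * S = 1 := by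
    calc Sᵀ * A * Sig * Aᵀ * S = Sᵀ * (A * Sig * Aᵀ) * S := by
          simp only [Matrix.mul_assoc]
      _ = 1 := hortho
  have hinv1 : (1 : Matrix (Fin m) (Fin m) ℝ)⁻¹ = 1 := by
    simp
  have hxm : xm = x₀ + (Sig * Aᵀ * S) *ᵥ (Sᵀ *ᵥ r₀) := by
    simp only [xm, hone, hinv1, Matrix.one_mulVec]
  set w : Fin m → ℝ := Sᵀ *ᵥ r₀ with hw
  set e : Fin d → ℝ := x₀ - xstar with he
  have hAe : A *ᵥ e = -r₀ := by
    simp only [he, Matrix.mulVec_sub, hxstar, r₀]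
    abel
  have dot_swap : ∀ {n p : ℕ} (N : Matrix (Fin n) (Fin p) ℝ) (u : Fin n → ℝ) (v : Fin p → ℝ),
      u ⬝ᵥ (N *ᵥ v) = (Nᵀ *ᵥ u) ⬝ᵥ v := by
    intro n p N u v
    rw [Matrix.dotProduct_mulVec, Matrix.mulVec_transpose]
  have hcollapse : Sig⁻¹ * (Sig * Aᵀ * S) = Aᵀ * S := by
    calc Sig⁻¹ * (Sig * Aᵀ * S) = (Sig⁻¹ * Sig) * (Aᵀ * S) := by
          simp only [Matrix.mul_assoc]
      _ = Aᵀ * S := by rw [hSigInv, Matrix.one_mul]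
  have h1 : ∀ c : Fin m → ℝ, Sig⁻¹ *ᵥ ((Sig * Aᵀ * S) *ᵥ c) = (Aᵀ * S) *ᵥ c := by
    intro c
    rw [Matrix.mulVec_mulVec, hcollapse]
  have cross : ∀ c : Fin m → ℝ, e ⬝ᵥ (Sig⁻¹ *ᵥ ((Sig * Aᵀ * S) *ᵥ c)) = -(w ⬝ᵥ c) := by
    intro c
    rw [h1, dot_swap]
    have h2 : (Aᵀ * S)ᵀ *ᵥ e = -w := by
      rw [Matrix.transpose_mul, Matrix.transpose_transpose, ← Matrix.mulVec_mulVec, hAe]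
      simp [hw, Matrix.mulVec_neg]
    rw [h2]
    simp
  have quad : ∀ c : Fin m → ℝ,
      ((Sig * Aᵀ * S) *ᵥ c) ⬝ᵥ (Sig⁻¹ *ᵥ ((Sig * Aᵀ * S) *ᵥ c)) = c ⬝ᵥ c := by
    intro c
    rw [h1, dot_swap]
    have h2 : (Aᵀ * S)ᵀ *ᵥ ((Sig * Aᵀ * S) *ᵥ c) = c := by
      rw [Matrix.transpose_mul, Matrix.transpose_transpose, Matrix.mulVec_mulVec]
      have h3 : Sᵀ * A * (Sig * Aᵀ * S) = 1 := by
        calc Sᵀ * A * (Sig * Aᵀ * S) = Sᵀ * A * Sig * Aᵀ * S := by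
              simp only [Matrix.mul_assoc]
          _ = 1 := hone
      rw [h3, Matrix.one_mulVec]
    rw [h2]
  -- key identity
  have key : ∀ c : Fin m → ℝ,
      (x₀ + (Sig * Aᵀ * S) *ᵥ c - xstar) ⬝ᵥ (Sig⁻¹ *ᵥ (x₀ + (Sig * Aᵀ * S) *ᵥ c - xstar))
        = e ⬝ᵥ (Sig⁻¹ *ᵥ e) - 2 * (w ⬝ᵥ c) + c ⬝ᵥ c := by
    intro c
    have hx : x₀ + (Sig * Aᵀ * S) *ᵥ c - xstar = e + (Sig * Aᵀ * S) *ᵥ c := by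
      simp only [he]; abel
    rw [hx, Matrix.mulVec_add, dotProduct_add, add_dotProduct,
      add_dotProduct]
    have hsym : ((Sig * Aᵀ * S) *ᵥ c) ⬝ᵥ (Sig⁻¹ *ᵥ e)
        = e ⬝ᵥ (Sig⁻¹ *ᵥ ((Sig * Aᵀ * S) *ᵥ c)) := by
      rw [dot_swap, hSigInvSym, dotProduct_comm, Matrix.dotProduct_mulVec,
        ← Matrix.mulVec_transpose, hSigInvSym]
    rw [hsym, cross c, quad c]
    ring
  have keyw := key w
  -- difference of quadratic forms
  have diff : ∀ c : Fin m → ℝ,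
      (x₀ + (Sig * Aᵀ * S) *ᵥ c - xstar) ⬝ᵥ (Sig⁻¹ *ᵥ (x₀ + (Sig * Aᵀ * S) *ᵥ c - xstar))
        - (xm - xstar) ⬝ᵥ (Sig⁻¹ *ᵥ (xm - xstar)) = (c - w) ⬝ᵥ (c - w) := by
    intro c
    rw [hxm, keyw, key c]
    simp only [sub_dotProduct, dotProduct_sub, dotProduct_comm w c]
    ring
  have qnonneg : ∀ x : Fin d → ℝ, 0 ≤ (x - xstar) ⬝ᵥ (Sig⁻¹ *ᵥ (x - xstar)) := by
    intro x
    have := hSig.inv.posSemidef.dotProduct_mulVec_nonneg (x - xstar)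
    simpa using this
  have selfnn : ∀ c : Fin m → ℝ, 0 ≤ c ⬝ᵥ c := by
    intro c
    exact Finset.sum_nonneg fun i _ => mul_self_nonneg _
  constructor
  · intro v hv
    rw [← hK] at hv
    obtain ⟨c, hc⟩ := hv
    rw [Matrix.mulVecLin_apply] at hc
    have hd := diff c
    rw [hc] at hd
    have hge : (xm - xstar) ⬝ᵥ (Sig⁻¹ *ᵥ (xm - xstar))
        ≤ (x₀ + v - xstar) ⬝ᵥ (Sig⁻¹ *ᵥ (x₀ + v - xstar)) := by
      have := selfnn (c - w)
      linarith
    exact Real.sqrt_le_sqrt hge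
  · intro v hv heq
    rw [← hK] at hv
    obtain ⟨c, hc⟩ := hv
    rw [Matrix.mulVecLin_apply] at hc
    have hd := diff c
    rw [hc] at hd
    simp only [f] at heq
    have hq : (x₀ + v - xstar) ⬝ᵥ (Sig⁻¹ *ᵥ (x₀ + v - xstar))
        = (xm - xstar) ⬝ᵥ (Sig⁻¹ *ᵥ (xm - xstar)) := by
      have hq1 := qnonneg (x₀ + v)
      have hq2 := qnonneg xm
      calc (x₀ + v - xstar) ⬝ᵥ (Sig⁻¹ *ᵥ (x₀ + v - xstar))
          = (Real.sqrt ((x₀ + v - xstar) ⬝ᵥ (Sig⁻¹ *ᵥ (x₀ + v - xstar)))) ^ 2 :=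
            (Real.sq_sqrt hq1).symm
        _ = (Real.sqrt ((xm - xstar) ⬝ᵥ (Sig⁻¹ *ᵥ (xm - xstar)))) ^ 2 := by rw [heq]
        _ = (xm - xstar) ⬝ᵥ (Sig⁻¹ *ᵥ (xm - xstar)) := Real.sq_sqrt hq2
    have hcw : (c - w) ⬝ᵥ (c - w) = 0 := by rw [← hd, hq]; ring
    have hsub : c - w = 0 := (dotProduct_self_eq_zero).1 hcw
    have hcweq : c = w := sub_eq_zero.mp hsub
    rw [← hc, hcweq, hxm]
end
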